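/- arXiv:2605.25859 — 3 statements merged into one kernel-verified Lean document; each statement's English description precedes it below -/
import Mathlib

section
/- Let (A, 𝒜, μ) and (B, ℬ, ν) be probability spaces, and let φ : B → ℝ and ψ : A × B → ℝ be bounded measurable functions. On the product probability space (A × B × B, μ ⊗ ν ⊗ ν) define L₁(a,b₁,b₂) := c + φ(b₁)·ψ(a,b₂) and L₂(a,b₁,b₂) := c + φ(b₂)·ψ(a,b₁), where c ∈ ℝ is a constant. If ∫ φ(b₁)·ψ(a,b₂) d(μ⊗ν⊗ν)(a,b₁,b₂) = 0 (so that the common mean of L₁ and L₂ equals c), then Cov(L₁, L₂) := E[L₁·L₂] − E[L₁]·E[L₂] = ∫_A ( ∫_B φ(b)·ψ(a,b) dν(b) )² dμ(a). Moreover, if ∫_B φ dν = 0, then the preceding hypothesis holds automatically and Cov(L₁, L₂) = ∫_A ( ∫_B φ(b)·ψ(a,b) dν(b) − (∫_B φ dν)·(∫_B ψ(a,b) dν(b)) )² dμ(a), i.e., the square of the ν-covariance of φ and ψ(a,·), averaged over a ∼ μ. -/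
/-!
Write `X = φ(b₁) ψ(a, b₂)` and `Y = φ(b₂) ψ(a, b₁)`, so that `L₁ = c + X` and `L₂ = c + Y`.
The covariance ignores the constant `c`, so it equals `E[XY] - E[X] E[Y]`. Conditionally on the
shared coordinate `a`, the two hold-out coordinates are independent: by Fubini, `E[X]` and `E[Y]`
both equal `∫ (∫ φ dν) (∫ ψ(a, ·) dν) dμ(a)`, while `XY = (φ(b₁) ψ(a, b₁)) (φ(b₂) ψ(a, b₂))`
integrates to `∫ (∫ φ ψ(a, ·) dν)² dμ(a)`.
-/

open MeasureTheory ProbabilityTheory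

lemma memLp_of_abs_le {α : Type*} [MeasurableSpace α] {μ : Measure α} [IsFiniteMeasure μ]
    {f : α → ℝ} (hf : Measurable f) {C : ℝ} (hC : ∀ x, |f x| ≤ C) (p : ENNReal) :
    MemLp f p μ :=
  MemLp.of_bound hf.aestronglyMeasurable C (ae_of_all _ hC)

lemma integral_const_add_mul_sub {Ω : Type*} [MeasurableSpace Ω] {μ : Measure Ω}
    [IsProbabilityMeasure μ] {X Y : Ω → ℝ} (hX : MemLp X 2 μ) (hY : MemLp Y 2 μ) (c : ℝ) :
    ∫ ω, (c + X ω) * (c + Y ω) ∂μ - (∫ ω, c + X ω ∂μ) * ∫ ω, c + Y ω ∂μ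
      = ∫ ω, X ω * Y ω ∂μ - (∫ ω, X ω ∂μ) * ∫ ω, Y ω ∂μ := by
  have hcX : MemLp (fun ω => c + X ω) 2 μ := (memLp_const c).add hX
  have hcY : MemLp (fun ω => c + Y ω) 2 μ := (memLp_const c).add hY
  calc _ = cov[fun ω => c + X ω, fun ω => c + Y ω; μ] := (covariance_eq_sub hcX hcY).symm
    _ = cov[X, Y; μ] := by
      rw [covariance_const_add_left (hX.integrable one_le_two),
        covariance_const_add_right (hY.integrable one_le_two)]
    _ = _ := covariance_eq_sub hX hY

lemma integral_prod_prod_of_eq_mul {A B₁ B₂ : Type*} [MeasurableSpace A] [MeasurableSpace B₁]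
    [MeasurableSpace B₂] {μ : Measure A} {ν₁ : Measure B₁} {ν₂ : Measure B₂}
    [SFinite μ] [SFinite ν₁] [SFinite ν₂] {F : A × B₁ × B₂ → ℝ} (f : A → B₁ → ℝ) (g : A → B₂ → ℝ)
    (hF : ∀ p, F p = f p.1 p.2.1 * g p.1 p.2.2) (hint : Integrable F (μ.prod (ν₁.prod ν₂))) :
    ∫ p, F p ∂μ.prod (ν₁.prod ν₂) = ∫ a, (∫ b, f a b ∂ν₁) * (∫ b, g a b ∂ν₂) ∂μ := by
  rw [integral_prod _ hint]
  refine integral_congr_ae (ae_of_all _ fun a => ?_)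
  simp only [hF]
  exact integral_prod_mul (f a) (g a)

/-- **Factorization Lemma.**
On the product probability space `A × B × B` (shared training data `a`, two hold-out
folds `b₁, b₂`), with bounded measurable `φ : B → ℝ` (test statistic) and
`ψ : A × B → ℝ` (decision function), define the fold losses
`L₁ (a,b₁,b₂) = c + φ b₁ * ψ (a, b₂)` and `L₂ (a,b₁,b₂) = c + φ b₂ * ψ (a, b₁)`.
If the cross term integrates to zero (so that both losses have mean `c`), then
`Cov(L₁, L₂) = ∫_A (∫_B φ b * ψ (a,b) dν)² dμ`.  Moreover, if `∫ φ dν = 0`, this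
hypothesis holds automatically and the covariance equals the `μ`-average of the
squared `ν`-covariance of `φ` and `ψ(a, ·)`. -/
theorem factorization_lemma
    {A B : Type*} [MeasurableSpace A] [MeasurableSpace B]
    (μ : Measure A) (ν : Measure B)
    [IsProbabilityMeasure μ] [IsProbabilityMeasure ν]
    (φ : B → ℝ) (ψ : A × B → ℝ) (c : ℝ)
    (hφ : Measurable φ) (hψ : Measurable ψ)
    (Cφ : ℝ) (hφbd : ∀ b, |φ b| ≤ Cφ)
    (Cψ : ℝ) (hψbd : ∀ p, |ψ p| ≤ Cψ) :
    ((∫ p : A × B × B, φ p.2.1 * ψ (p.1, p.2.2) ∂(μ.prod (ν.prod ν))) = 0 →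
      (∫ p : A × B × B,
          (c + φ p.2.1 * ψ (p.1, p.2.2)) * (c + φ p.2.2 * ψ (p.1, p.2.1))
            ∂(μ.prod (ν.prod ν)))
        - (∫ p : A × B × B, (c + φ p.2.1 * ψ (p.1, p.2.2)) ∂(μ.prod (ν.prod ν)))
          * (∫ p : A × B × B, (c + φ p.2.2 * ψ (p.1, p.2.1)) ∂(μ.prod (ν.prod ν)))
        = ∫ a, (∫ b, φ b * ψ (a, b) ∂ν) ^ 2 ∂μ)
    ∧
    ((∫ b, φ b ∂ν) = 0 →
      (∫ p : A × B × B, φ p.2.1 * ψ (p.1, p.2.2) ∂(μ.prod (ν.prod ν))) = 0 ∧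
      (∫ p : A × B × B,
          (c + φ p.2.1 * ψ (p.1, p.2.2)) * (c + φ p.2.2 * ψ (p.1, p.2.1))
            ∂(μ.prod (ν.prod ν)))
        - (∫ p : A × B × B, (c + φ p.2.1 * ψ (p.1, p.2.2)) ∂(μ.prod (ν.prod ν)))
          * (∫ p : A × B × B, (c + φ p.2.2 * ψ (p.1, p.2.1)) ∂(μ.prod (ν.prod ν)))
        = ∫ a, ((∫ b, φ b * ψ (a, b) ∂ν)
            - (∫ b, φ b ∂ν) * (∫ b, ψ (a, b) ∂ν)) ^ 2 ∂μ) := by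
  have hbd : ∀ b a b', |φ b * ψ (a, b')| ≤ Cφ * Cψ := fun b a b' => by
    rw [abs_mul]
    exact mul_le_mul (hφbd b) (hψbd _) (abs_nonneg _) ((abs_nonneg _).trans (hφbd b))
  have hX : MemLp (fun p : A × B × B => φ p.2.1 * ψ (p.1, p.2.2)) 2 (μ.prod (ν.prod ν)) :=
    memLp_of_abs_le (by fun_prop) (fun p => hbd _ _ _) 2
  have hY : MemLp (fun p : A × B × B => φ p.2.2 * ψ (p.1, p.2.1)) 2 (μ.prod (ν.prod ν)) :=
    memLp_of_abs_le (by fun_prop) (fun p => hbd _ _ _) 2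
  have hXmean := integral_prod_prod_of_eq_mul (fun _ b => φ b) (fun a b => ψ (a, b))
    (fun _ => rfl) (hX.integrable one_le_two)
  have hYmean := integral_prod_prod_of_eq_mul (fun a b => ψ (a, b)) (fun _ b => φ b)
    (fun _ => mul_comm _ _) (hY.integrable one_le_two)
  have hXY := integral_prod_prod_of_eq_mul (fun a b => φ b * ψ (a, b)) (fun a b => φ b * ψ (a, b))
    (F := fun p => φ p.2.1 * ψ (p.1, p.2.2) * (φ p.2.2 * ψ (p.1, p.2.1)))
    (fun _ => by ring) (hX.integrable_mul hY)
  have hYX : ∫ p, φ p.2.2 * ψ (p.1, p.2.1) ∂μ.prod (ν.prod ν)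
      = ∫ p, φ p.2.1 * ψ (p.1, p.2.2) ∂μ.prod (ν.prod ν) := by
    simp only [hXmean, hYmean, mul_comm]
  rw [integral_const_add_mul_sub hX hY, hXY, hYX]
  refine ⟨fun h0 => by simp [h0, sq], fun hφ0 => ?_⟩
  have h0 : ∫ p : A × B × B, φ p.2.1 * ψ (p.1, p.2.2) ∂(μ.prod (ν.prod ν)) = 0 := by
    simp [hXmean, hφ0]
  exact ⟨h0, by simp [h0, hφ0, sq]⟩
end

section
/- Let m ≥ 1 be an integer and θ ∈ ℝ. Let X ∼ Bin(m, 1/2), i.e., P(X = x) = 2^{−m}·binom(m, x) for x = 0, …, m. Then the covariance of X with the indicator 1{X > θ} satisfies Σ_{x=0}^{m} 2^{−m}·binom(m, x)·(x − m/2)·1{x > θ} = (m/4)·2^{−(m−1)}·binom(m−1, ⌊θ⌋), where binom(a, b) := 0 whenever b < 0 or b > a (in particular the right-hand side is 0 when ⌊θ⌋ < 0 or ⌊θ⌋ > m−1). -/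
/-!
With `m = n + 1`, the absorption and Pascal identities give
`binom(m, x) (2x - m) = m (binom(n, x - 1) - binom(n, x))`, so the sum over `x > ⌊θ⌋` of
`binom(m, x) (x - m/2)` telescopes to `(m/2) binom(n, ⌊θ⌋)`.
-/

/-- Binomial coefficient with an integer lower index, with the convention that it
vanishes for negative lower index (and, via `Nat.choose`, above the upper index). -/
def ibinom (a : ℕ) (b : ℤ) : ℕ := if 0 ≤ b then a.choose b.toNat else 0

@[simp]
lemma ibinom_natCast (a b : ℕ) : ibinom a b = a.choose b := by
  simp [ibinom]

lemma ibinom_of_neg {a : ℕ} {b : ℤ} (hb : b < 0) : ibinom a b = 0 := by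
  simp [ibinom, hb.not_ge]

lemma ibinom_of_lt {a : ℕ} {b : ℤ} (hb : a < b) : ibinom a b = 0 := by
  rw [ibinom, if_pos (by omega)]
  exact Nat.choose_eq_zero_of_lt (by omega)

lemma ibinom_max_neg_one (a : ℕ) (b : ℤ) : ibinom a (max (-1) b) = ibinom a b := by
  rcases le_or_gt (-1) b with hb | hb
  · rw [max_eq_right hb]
  · rw [max_eq_left hb.le, ibinom_of_neg (by norm_num), ibinom_of_neg (by omega)]

lemma succ_choose_mul_two_mul_sub {R : Type*} [CommRing R] (n x : ℕ) :
    ((n + 1).choose x : R) * (2 * x - (n + 1)) =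
      (n + 1) * (ibinom n (x - 1 : ℤ) - ibinom n x) := by
  cases x with
  | zero => simp [ibinom]
  | succ j =>
    have absorption : ((n : R) + 1) * n.choose j = (n + 1).choose (j + 1) * ((j : R) + 1) := by
      exact_mod_cast congrArg (Nat.cast : ℕ → R) (Nat.add_one_mul_choose_eq n j)
    have pascal : ((n + 1).choose (j + 1) : R) = n.choose j + n.choose (j + 1) := by
      exact_mod_cast congrArg (Nat.cast : ℕ → R) (Nat.choose_succ_succ' n j)
    rw [ibinom_natCast, Nat.cast_succ (R := ℤ), add_sub_cancel_right, ibinom_natCast]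
    push_cast
    linear_combination (-2) * absorption - (n + 1) * pascal

/-- The terms with `x > k` telescope: `(n + 1) binom(n, max (x - 1) k)` is a primitive of them. -/
lemma sum_succ_choose_mul_two_mul_sub_of_lt {R : Type*} [CommRing R] (n : ℕ) (k : ℤ) :
    ∑ x ∈ Finset.range (n + 2),
        (if k < x then ((n + 1).choose x : R) * (2 * x - (n + 1)) else 0) =
      (n + 1) * ibinom n k := by
  set g : ℕ → R := fun x ↦ (n + 1) * ibinom n (max (x - 1 : ℤ) k)
  have step (x : ℕ) :
      (if k < x then ((n + 1).choose x : R) * (2 * x - (n + 1)) else 0) = g x - g (x + 1) := by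
    simp only [g]
    split_ifs with hx
    · rw [succ_choose_mul_two_mul_sub, max_eq_left (by omega), max_eq_left (by omega),
        Nat.cast_succ (R := ℤ), add_sub_cancel_right]
      ring
    · rw [max_eq_right (by omega), max_eq_right (by omega), sub_self]
  have top : ibinom n (max ((n + 2 : ℕ) - 1 : ℤ) k) = 0 := ibinom_of_lt (by omega)
  rw [Finset.sum_congr rfl fun x _ ↦ step x, Finset.sum_range_sub']
  simp only [g, top]
  simp [ibinom_max_neg_one]

theorem cov_binomial_indicator_general (m : ℕ) (θ : ℝ) :
    ∑ x ∈ Finset.range (m + 1),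
        (2 : ℝ)⁻¹ ^ m * (m.choose x : ℝ) * ((x : ℝ) - m / 2) *
          (if θ < (x : ℝ) then (1 : ℝ) else 0)
      = ((m : ℝ) / 4) * (2 : ℝ)⁻¹ ^ (m - 1) * (ibinom (m - 1) ⌊θ⌋ : ℝ) := by
  cases m with
  | zero => simp
  | succ n =>
    have rescale (x : ℕ) :
        (2 : ℝ)⁻¹ ^ (n + 1) * ((n + 1).choose x : ℝ) * ((x : ℝ) - (n + 1 : ℕ) / 2) *
            (if θ < (x : ℝ) then 1 else 0) =
          (2 : ℝ)⁻¹ ^ (n + 2) *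
            (if ⌊θ⌋ < x then ((n + 1).choose x : ℝ) * (2 * x - (n + 1)) else 0) := by
      simp only [Int.floor_lt, Int.cast_natCast, mul_ite, mul_one, mul_zero]
      split_ifs <;> push_cast <;> ring
    rw [Finset.sum_congr rfl fun x _ ↦ rescale x, ← Finset.mul_sum,
      sum_succ_choose_mul_two_mul_sub_of_lt]
    simp only [Nat.add_sub_cancel]
    push_cast
    ring

/-- For `X ∼ Bin(m, 1/2)` and any threshold `θ ∈ ℝ`,
`Cov(X, 1{X > θ}) = (m/4) · 2^{-(m-1)} · binom(m-1, ⌊θ⌋)`,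
where the binomial coefficient is `0` if `⌊θ⌋ < 0` or `⌊θ⌋ > m - 1`. -/
theorem cov_binomial_indicator (m : ℕ) (hm : 1 ≤ m) (θ : ℝ) :
    ∑ x ∈ Finset.range (m + 1),
        (2 : ℝ)⁻¹ ^ m * (m.choose x : ℝ) * ((x : ℝ) - m / 2) *
          (if θ < (x : ℝ) then (1 : ℝ) else 0)
      = ((m : ℝ) / 4) * (2 : ℝ)⁻¹ ^ (m - 1) * (ibinom (m - 1) ⌊θ⌋ : ℝ) :=
  cov_binomial_indicator_general m θ
end

section
/- In the Majority cross-validation model with n, k, m, P, X_i, Y_{−i}, L̂_i as in the context, the covariance between the first two fold losses satisfies: E[L̂₁·L̂₂] − E[L̂₁]·E[L̂₂] = 4 · Σ_{y=0}^{n−2m} 2^{−(n−2m)}·binom(n−2m, y) · ( Σ_{x=0}^{m} 2^{−m}·binom(m, x)·(x/m)·1{x > (n−m)/2 − y} − ( Σ_{x=0}^{m} 2^{−m}·binom(m, x)·(x/m) ) · ( Σ_{x=0}^{m} 2^{−m}·binom(m, x)·1{x > (n−m)/2 − y} ) )². That is, Cov(L̂₁, L̂₂) = 4·E_Y[ Cov(X/m,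 1{X > (n−m)/2 − Y} | Y)² ] where X ∼ Bin(m, 1/2) and Y ∼ Bin(n−2m, 1/2) are independent. -/
open Finset

/-- Fold `i` (for `1 ≤ i ≤ k`) consists of the indices `{(i-1)·m, …, i·m - 1}`. -/
def cvFold (n m i : ℕ) : Finset (Fin n) :=
  Finset.univ.filter fun j => (i - 1) * m ≤ (j : ℕ) ∧ (j : ℕ) < i * m

/-- `X_i(ω)`: number of 1-labels inside cvFold `i`. -/
def Xc (n m i : ℕ) (ω : Fin n → Bool) : ℕ :=
  ((cvFold n m i).filter fun j => ω j = true).card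

/-- `Y_{-i}(ω)`: number of 1-labels outside cvFold `i`. -/
def Yc (n m i : ℕ) (ω : Fin n → Bool) : ℕ :=
  ((Finset.univ \ cvFold n m i).filter fun j => ω j = true).card

/-- Hold-out error on cvFold `i` of the Majority algorithm trained on the complement of
cvFold `i`: it predicts the constant label `1` iff `Y_{-i} > (n-m)/2`, so the hold-out
error is `(X_i/m)·1{Y_{-i} ≤ (n-m)/2} + ((m-X_i)/m)·1{Y_{-i} > (n-m)/2}`. -/
noncomputable def Lhat (n m i : ℕ) (ω : Fin n → Bool) : ℝ :=
  if ((n : ℝ) - m) / 2 < (Yc n m i ω : ℝ) then ((m : ℝ) - Xc n m i ω) / m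
  else (Xc n m i ω : ℝ) / m

/-- Expectation with respect to the uniform probability measure on `Fin n → Bool`
(i.e. `n` i.i.d. fair-coin binary labels). -/
noncomputable def expec (n : ℕ) (f : (Fin n → Bool) → ℝ) : ℝ :=
  (∑ ω : Fin n → Bool, f ω) / 2 ^ n

/-!
Split the labels into fold 1, fold 2 and the remaining `n - 2m` positions, with label counts
`X₁`, `X₂`, `Z`. Then `Y₋₁ = X₂ + Z`, `Y₋₂ = X₁ + Z`, and with `Aᵢ = Xᵢ / m` and
`G(x) = 1{x > (n - m)/2 - Z}` the hold-out errors are `L̂₁ = A₁ + (1 - 2A₁) G(X₂)` and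
`L̂₂ = A₂ + (1 - 2A₂) G(X₁)`. Given `Z`, the counts `X₁`, `X₂` are independent `Bin(m, 1/2)`, so
`E[1 - 2A] = 0`. Hence `E[L̂ᵢ | Z] = 1/2`, while
`E[L̂₁ L̂₂ | Z] = 1/4 + E[(1 - 2A) G]² = 1/4 + 4 Cov(A, G)²`; averaging over `Z` gives the claim.
-/

noncomputable def fairBinom (m x : ℕ) : ℝ := (2 : ℝ)⁻¹ ^ m * (m.choose x : ℝ)

theorem sum_fairBinom (m : ℕ) : ∑ x ∈ range (m + 1), fairBinom m x = 1 := by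
  have h := congrArg (Nat.cast : ℕ → ℝ) (Nat.sum_range_choose m)
  push_cast at h
  simp only [fairBinom, ← mul_sum, h, inv_pow, inv_mul_cancel₀ (by positivity : (2 : ℝ) ^ m ≠ 0)]

theorem sum_fairBinom_mul_div_self {m : ℕ} (hm : m ≠ 0) :
    ∑ x ∈ range (m + 1), fairBinom m x * ((x : ℝ) / m) = 1 / 2 := by
  have h := congrArg (Nat.cast : ℕ → ℝ) (Nat.sum_range_mul_choose m)
  push_cast at h
  have h2 : (2 : ℝ) ^ m = 2 ^ (m - 1) * 2 := by
    rw [← pow_succ, Nat.sub_add_cancel (Nat.one_le_iff_ne_zero.mpr hm)]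
  calc _ = (2 : ℝ)⁻¹ ^ m / m * ∑ x ∈ range (m + 1), (x : ℝ) * m.choose x := by
        rw [mul_sum]
        exact sum_congr rfl fun x _ => by unfold fairBinom; ring
    _ = 1 / 2 := by
        rw [h, inv_pow, h2]
        field_simp

section Counting

variable {ι : Type*}

theorem Finset.sum_powerset_union_of_disjoint [DecidableEq ι] {M : Type*} [AddCommMonoid M]
    {s t : Finset ι} (h : Disjoint s t) (f : Finset ι → M) :
    ∑ u ∈ (s ∪ t).powerset, f u = ∑ a ∈ s.powerset, ∑ b ∈ t.powerset, f (a ∪ b) := by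
  rw [← sum_product']
  refine sum_nbij' (fun u => (u ∩ s, u ∩ t)) (fun p => p.1 ∪ p.2) ?_ ?_ ?_ ?_ ?_
  · simp
  · intro p hp
    simp only [mem_product, mem_powerset] at hp ⊢
    exact union_subset_union hp.1 hp.2
  · intro u hu
    simp only [mem_powerset] at hu
    simp [← inter_union_distrib_left, inter_eq_left.mpr hu]
  · rintro ⟨a, b⟩ hp
    simp only [mem_product, mem_powerset] at hp
    simp [union_inter_distrib_right, inter_eq_left.mpr hp.1, inter_eq_left.mpr hp.2,
      disjoint_iff_inter_eq_empty.mp (h.mono_left hp.1),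
      disjoint_iff_inter_eq_empty.mp (h.symm.mono_left hp.2)]
  · intro u hu
    rw [← inter_union_distrib_left, inter_eq_left.mpr (mem_powerset.mp hu)]

theorem Finset.sum_powerset_inv_two_pow_mul_card (s : Finset ι) (f : ℕ → ℝ) :
    ∑ u ∈ s.powerset, (2 : ℝ)⁻¹ ^ #s * f #u = ∑ x ∈ range (#s + 1), fairBinom #s x * f x := by
  simp only [← mul_sum, sum_powerset_apply_card, nsmul_eq_mul, fairBinom, mul_assoc]

theorem sum_boolFun_eq_sum_powerset [Fintype ι] [DecidableEq ι] {M : Type*} [AddCommMonoid M]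
    (G : (ι → Bool) → M) : ∑ ω, G ω = ∑ u ∈ univ.powerset, G fun i => decide (i ∈ u) :=
  sum_nbij' (fun ω => univ.filter fun i => ω i = true) (fun u i => decide (i ∈ u))
    (by simp) (by simp) (fun ω _ => by ext; simp) (fun u _ => by ext; simp)
    (fun ω _ => by congr; ext; simp)

theorem sum_boolFun_div_two_pow_card_three_blocks [Fintype ι] [DecidableEq ι] {A B C : Finset ι}
    (hAB : Disjoint A B) (hC : Disjoint C (A ∪ B)) (hcover : C ∪ (A ∪ B) = univ)
    (F : ℕ → ℕ → ℕ → ℝ) :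
    (∑ ω : ι → Bool, F #{i ∈ A | ω i = true} #{i ∈ B | ω i = true} #{i ∈ C | ω i = true})
        / 2 ^ Fintype.card ι
      = ∑ z ∈ range (#C + 1), fairBinom #C z * ∑ x ∈ range (#A + 1), fairBinom #A x *
          ∑ y ∈ range (#B + 1), fairBinom #B y * F x y z := by
  have hcard : Fintype.card ι = #C + (#A + #B) := by
    rw [← card_univ, ← hcover, card_union_of_disjoint hC, card_union_of_disjoint hAB]
  have hblock : ∀ a ∈ A.powerset, ∀ b ∈ B.powerset, ∀ c ∈ C.powerset,
      A ∩ (c ∪ (a ∪ b)) = a ∧ B ∩ (c ∪ (a ∪ b)) = b ∧ C ∩ (c ∪ (a ∪ b)) = c := by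
    intro a ha b hb c hc
    simp only [mem_powerset] at ha hb hc
    refine ⟨?_, ?_, ?_⟩ <;> ext i <;> grind [disjoint_left]
  rw [sum_boolFun_eq_sum_powerset, div_eq_inv_mul, mul_sum, ← hcover,
    sum_powerset_union_of_disjoint hC]
  simp only [sum_powerset_union_of_disjoint hAB, filter_mem_eq_inter, decide_eq_true_eq]
  calc _ = ∑ c ∈ C.powerset, (2 : ℝ)⁻¹ ^ #C * ∑ a ∈ A.powerset, (2 : ℝ)⁻¹ ^ #A *
        ∑ b ∈ B.powerset, (2 : ℝ)⁻¹ ^ #B * F #a #b #c := by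
        simp only [mul_sum]
        refine sum_congr rfl fun c hc => sum_congr rfl fun a ha => sum_congr rfl fun b hb => ?_
        obtain ⟨ha', hb', hc'⟩ := hblock a ha b hb c hc
        rw [ha', hb', hc', hcard, ← inv_pow, pow_add, pow_add]
        ring
    _ = _ := (sum_powerset_inv_two_pow_mul_card C _).trans <| sum_congr rfl fun z _ =>
        congrArg _ <| (sum_powerset_inv_two_pow_mul_card A _).trans <| sum_congr rfl fun x _ =>
          congrArg _ <| sum_powerset_inv_two_pow_mul_card B fun y => F x y z

end Counting

section ConditionalMoments

/- Read `w` as the law of a fold count, `a x = x / m`, and `g y` as the indicator that Majority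
predicts `1` when the other fold holds `y` ones: then `a x + (1 - 2 * a x) * g y` is the hold-out
error on a fold holding `x` ones. -/

variable {α : Type*} {s : Finset α} {w a : α → ℝ}

theorem sum_mul_sum_mul_mul (P Q : α → ℝ) :
    ∑ x ∈ s, w x * ∑ y ∈ s, w y * (P x * Q y) = (∑ x ∈ s, w x * P x) * ∑ y ∈ s, w y * Q y := by
  rw [sum_mul]
  refine sum_congr rfl fun x _ => ?_
  rw [mul_sum, mul_sum]
  exact sum_congr rfl fun y _ => by ring

theorem sum_mul_one_sub_two_mul (hw : ∑ x ∈ s, w x = 1) (ha : ∑ x ∈ s, w x * a x = 1 / 2) :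
    ∑ x ∈ s, w x * (1 - 2 * a x) = 0 := by
  simp only [mul_sub, mul_one, sum_sub_distrib, mul_left_comm _ (2 : ℝ), ← mul_sum, hw, ha]
  norm_num

theorem sum_mul_sum_mul_comm (f : α → α → ℝ) :
    ∑ x ∈ s, w x * ∑ y ∈ s, w y * f x y = ∑ y ∈ s, w y * ∑ x ∈ s, w x * f x y := by
  simp only [mul_sum]
  rw [sum_comm]
  exact sum_congr rfl fun y _ => sum_congr rfl fun x _ => mul_left_comm _ _ _

theorem sum_holdOut (hw : ∑ x ∈ s, w x = 1) (ha : ∑ x ∈ s, w x * a x = 1 / 2) (g : α → ℝ) :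
    ∑ x ∈ s, w x * ∑ y ∈ s, w y * (a x + (1 - 2 * a x) * g y) = 1 / 2 := by
  have split : ∀ x y, a x + (1 - 2 * a x) * g y = a x * 1 + (1 - 2 * a x) * g y :=
    fun x y => by rw [mul_one]
  simp only [split, mul_add, sum_add_distrib, sum_mul_sum_mul_mul]
  rw [sum_mul_one_sub_two_mul hw ha, ha]
  simp only [mul_one, hw]
  norm_num

theorem sum_holdOut_mul_holdOut (hw : ∑ x ∈ s, w x = 1) (ha : ∑ x ∈ s, w x * a x = 1 / 2)
    (g : α → ℝ) :
    ∑ x ∈ s, w x * ∑ y ∈ s, w y * ((a x + (1 - 2 * a x) * g y) * (a y + (1 - 2 * a y) * g x))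
      = 1 / 4 + 4 * (∑ x ∈ s, w x * a x * g x - (∑ x ∈ s, w x * a x) * ∑ x ∈ s, w x * g x) ^ 2 := by
  -- The two cross terms of the product carry the factor `∑ w (1 - 2a) = 0`.
  have split : ∀ x y, (a x + (1 - 2 * a x) * g y) * (a y + (1 - 2 * a y) * g x)
      = a x * a y + a x * g x * (1 - 2 * a y) + (1 - 2 * a x) * (a y * g y)
        + (1 - 2 * a x) * g x * ((1 - 2 * a y) * g y) := fun x y => by ring
  have hbg : ∑ x ∈ s, w x * ((1 - 2 * a x) * g x)
      = ∑ x ∈ s, w x * g x - 2 * ∑ x ∈ s, w x * a x * g x := by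
    rw [mul_sum, ← sum_sub_distrib]
    exact sum_congr rfl fun x _ => by ring
  simp only [split, mul_add, sum_add_distrib, sum_mul_sum_mul_mul]
  rw [sum_mul_one_sub_two_mul hw ha, ha, hbg]
  simp only [mul_assoc]
  ring

theorem sum_mul_const_add_sub (hw : ∑ x ∈ s, w x = 1) (μ : ℝ) (c : α → ℝ) :
    ∑ x ∈ s, w x * (μ + c x) - μ = ∑ x ∈ s, w x * c x := by
  simp only [mul_add, sum_add_distrib, ← sum_mul, hw, one_mul, add_sub_cancel_left]

end ConditionalMoments

def cvRest (n m : ℕ) : Finset (Fin n) :=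
  univ.filter fun j => 2 * m ≤ (j : ℕ)

def Zc (n m : ℕ) (ω : Fin n → Bool) : ℕ :=
  ((cvRest n m).filter fun j => ω j = true).card

section Folds

variable {n m : ℕ}

theorem card_cvFold {i : ℕ} (hi : 1 ≤ i) (hin : i * m ≤ n) : #(cvFold n m i) = m := by
  obtain ⟨i, rfl⟩ : ∃ j, i = j + 1 := ⟨i - 1, by omega⟩
  have : (cvFold n m (i + 1)).map Fin.valEmbedding = Ico (i * m) (i * m + m) := by
    ext j
    simp only [cvFold, mem_map, mem_filter, mem_univ, true_and, mem_Ico, Fin.valEmbedding_apply]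
    constructor
    · rintro ⟨j, hj, rfl⟩; simpa [add_mul] using hj
    · intro hj; exact ⟨⟨j, by nlinarith⟩, by simpa [add_mul] using hj, rfl⟩
  rw [← card_map Fin.valEmbedding, this, Nat.card_Ico, Nat.add_sub_cancel_left]

variable (n m)

theorem disjoint_cvFold_one_two : Disjoint (cvFold n m 1) (cvFold n m 2) :=
  disjoint_left.mpr fun j => by simp [cvFold]; omega

theorem disjoint_cvFold_cvRest {i : ℕ} (hi : i ≤ 2) : Disjoint (cvFold n m i) (cvRest n m) :=
  disjoint_left.mpr fun j hj hj' => by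
    simp only [cvFold, cvRest, mem_filter, mem_univ, true_and] at hj hj'
    have := Nat.mul_le_mul_right m hi
    omega

theorem disjoint_cvRest_cvFold : Disjoint (cvRest n m) (cvFold n m 1 ∪ cvFold n m 2) :=
  disjoint_union_right.mpr
    ⟨(disjoint_cvFold_cvRest n m (by norm_num)).symm, (disjoint_cvFold_cvRest n m le_rfl).symm⟩

theorem cvRest_union_cvFold : cvRest n m ∪ (cvFold n m 1 ∪ cvFold n m 2) = univ := by
  ext j; simp [cvFold, cvRest]; omega

theorem univ_sdiff_cvFold_one : univ \ cvFold n m 1 = cvFold n m 2 ∪ cvRest n m := by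
  ext j; simp [cvFold, cvRest]; omega

theorem univ_sdiff_cvFold_two : univ \ cvFold n m 2 = cvFold n m 1 ∪ cvRest n m := by
  ext j; simp [cvFold, cvRest]; omega

theorem Yc_eq_of_univ_sdiff {i i' : ℕ} (hi' : i' ≤ 2)
    (h : univ \ cvFold n m i = cvFold n m i' ∪ cvRest n m) (ω : Fin n → Bool) :
    Yc n m i ω = Xc n m i' ω + Zc n m ω := by
  rw [Yc, h, filter_union,
    card_union_of_disjoint (disjoint_filter_filter (disjoint_cvFold_cvRest n m hi')), Xc, Zc]

theorem card_cvRest (h : 2 * m ≤ n) : #(cvRest n m) = n - 2 * m := by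
  have hcard := congrArg card (cvRest_union_cvFold n m)
  rw [card_union_of_disjoint (disjoint_cvRest_cvFold n m),
    card_union_of_disjoint (disjoint_cvFold_one_two n m), card_cvFold le_rfl (by omega),
    card_cvFold (by norm_num) h, card_univ, Fintype.card_fin] at hcard
  omega

variable {n m}

theorem expec_fold_counts (h : 2 * m ≤ n) (F : ℕ → ℕ → ℕ → ℝ) :
    expec n (fun ω => F (Xc n m 1 ω) (Xc n m 2 ω) (Zc n m ω))
      = ∑ z ∈ range (n - 2 * m + 1), fairBinom (n - 2 * m) z *
          ∑ x ∈ range (m + 1), fairBinom m x * ∑ y ∈ range (m + 1), fairBinom m y * F x y z := by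
  have := sum_boolFun_div_two_pow_card_three_blocks (disjoint_cvFold_one_two n m)
    (disjoint_cvRest_cvFold n m) (cvRest_union_cvFold n m) F
  rwa [Fintype.card_fin, card_cvFold le_rfl (by omega), card_cvFold (by norm_num) h,
    card_cvRest n m h] at this

end Folds

noncomputable def holdOutError (m : ℕ) (t : ℝ) (x y : ℕ) : ℝ :=
  if t < (y : ℝ) then ((m : ℝ) - x) / m else (x : ℝ) / m

theorem holdOutError_add {m : ℕ} (hm : m ≠ 0) (t : ℝ) (x y z : ℕ) :
    holdOutError m t x (y + z)
      = (x : ℝ) / m + (1 - 2 * ((x : ℝ) / m)) * if t - z < y then 1 else 0 := by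
  have hm' : (m : ℝ) ≠ 0 := Nat.cast_ne_zero.mpr hm
  unfold holdOutError
  push_cast
  by_cases h : t - z < y
  · rw [if_pos (by linarith), if_pos h]
    field_simp
    ring
  · rw [if_neg (by linarith), if_neg h]
    ring

section Majority

variable {n m : ℕ}

theorem Lhat_eq_holdOutError (i : ℕ) (ω : Fin n → Bool) :
    Lhat n m i ω = holdOutError m (((n : ℝ) - m) / 2) (Xc n m i ω) (Yc n m i ω) :=
  rfl

theorem expec_map_Lhat_one_two (h : 2 * m ≤ n) (Φ : ℝ → ℝ → ℝ) :
    expec n (fun ω => Φ (Lhat n m 1 ω) (Lhat n m 2 ω))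
      = ∑ z ∈ range (n - 2 * m + 1), fairBinom (n - 2 * m) z *
          ∑ x ∈ range (m + 1), fairBinom m x * ∑ y ∈ range (m + 1), fairBinom m y *
            Φ (holdOutError m (((n : ℝ) - m) / 2) x (y + z))
              (holdOutError m (((n : ℝ) - m) / 2) y (x + z)) := by
  have hY1 := Yc_eq_of_univ_sdiff n m (by norm_num) (univ_sdiff_cvFold_one n m)
  have hY2 := Yc_eq_of_univ_sdiff n m (by norm_num) (univ_sdiff_cvFold_two n m)
  simp only [Lhat_eq_holdOutError, hY1, hY2]
  exact expec_fold_counts h fun x y z => Φ (holdOutError m (((n : ℝ) - m) / 2) x (y + z))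
    (holdOutError m (((n : ℝ) - m) / 2) y (x + z))

theorem expec_Lhat_one (hm : m ≠ 0) (h : 2 * m ≤ n) : expec n (Lhat n m 1) = 1 / 2 := by
  rw [expec_map_Lhat_one_two h fun p _ => p]
  simp only [holdOutError_add hm]
  rw [sum_congr rfl fun z _ => congrArg (fairBinom _ z * ·)
      (sum_holdOut (sum_fairBinom m) (sum_fairBinom_mul_div_self hm) _),
    ← sum_mul, sum_fairBinom, one_mul]

theorem expec_Lhat_two (hm : m ≠ 0) (h : 2 * m ≤ n) : expec n (Lhat n m 2) = 1 / 2 := by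
  rw [expec_map_Lhat_one_two h fun _ q => q]
  simp only [holdOutError_add hm]
  rw [sum_congr rfl fun z _ => congrArg (fairBinom _ z * ·) <| (sum_mul_sum_mul_comm _).trans
      (sum_holdOut (sum_fairBinom m) (sum_fairBinom_mul_div_self hm) _),
    ← sum_mul, sum_fairBinom, one_mul]

theorem expec_Lhat_one_mul_Lhat_two (hm : m ≠ 0) (h : 2 * m ≤ n) :
    expec n (fun ω => Lhat n m 1 ω * Lhat n m 2 ω)
      = ∑ z ∈ range (n - 2 * m + 1), fairBinom (n - 2 * m) z * (1 / 4 + 4 *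
          (∑ x ∈ range (m + 1), fairBinom m x * ((x : ℝ) / m) *
              (if ((n : ℝ) - m) / 2 - z < x then 1 else 0)
            - (∑ x ∈ range (m + 1), fairBinom m x * ((x : ℝ) / m))
              * ∑ x ∈ range (m + 1), fairBinom m x *
                  (if ((n : ℝ) - m) / 2 - z < x then 1 else 0)) ^ 2) := by
  rw [expec_map_Lhat_one_two h (· * ·)]
  simp only [holdOutError_add hm]
  exact sum_congr rfl fun z _ => congrArg (fairBinom _ z * ·)
    (sum_holdOut_mul_holdOut (sum_fairBinom m) (sum_fairBinom_mul_div_self hm) _)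

end Majority

/-- **Fold covariance of Majority, conditional form.**
In the Majority cross-validation model with `k ∣ n`, `m = n/k`,
`Cov(L̂₁, L̂₂) = 4 · E_Y[ Cov(X/m, 1{X > (n-m)/2 - Y} | Y)² ]`
where `X ∼ Bin(m, 1/2)` and `Y ∼ Bin(n-2m, 1/2)` are independent. -/
theorem majority_fold_covariance_conditional
    (n k : ℕ) (hn : 2 ≤ n) (hk : 2 ≤ k) (hkn : k ∣ n) (m : ℕ) (hm : m = n / k) :
    expec n (fun ω => Lhat n m 1 ω * Lhat n m 2 ω)
        - expec n (Lhat n m 1) * expec n (Lhat n m 2)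
      = 4 * ∑ y ∈ Finset.range (n - 2 * m + 1),
          (2 : ℝ)⁻¹ ^ (n - 2 * m) * ((n - 2 * m).choose y : ℝ) *
          ((∑ x ∈ Finset.range (m + 1),
              (2 : ℝ)⁻¹ ^ m * (m.choose x : ℝ) * ((x : ℝ) / m) *
                (if ((n : ℝ) - m) / 2 - y < (x : ℝ) then (1 : ℝ) else 0))
            - (∑ x ∈ Finset.range (m + 1),
                (2 : ℝ)⁻¹ ^ m * (m.choose x : ℝ) * ((x : ℝ) / m))
              * (∑ x ∈ Finset.range (m + 1),
                  (2 : ℝ)⁻¹ ^ m * (m.choose x : ℝ) *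
                    (if ((n : ℝ) - m) / 2 - y < (x : ℝ) then (1 : ℝ) else 0))) ^ 2 := by
  have hnk : n = k * m := by rw [hm, Nat.mul_div_cancel' hkn]
  have hm0 : m ≠ 0 := by rintro rfl; omega
  have h2m : 2 * m ≤ n := hnk ▸ Nat.mul_le_mul_right m hk
  rw [expec_Lhat_one_mul_Lhat_two hm0 h2m, expec_Lhat_one hm0 h2m, expec_Lhat_two hm0 h2m,
    show (1 / 2 : ℝ) * (1 / 2) = 1 / 4 by norm_num, sum_mul_const_add_sub (sum_fairBinom _),
    mul_sum]
  exact sum_congr rfl fun z _ => mul_left_comm _ _ _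
end
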